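/- arXiv:1802.07230 — 5 statements merged into one kernel-verified Lean document; each statement's English description precedes it below -/
import Mathlib

section
/- Let a > 0 and let φ ∈ L^1(]-a,a[). Then ‖φ^o‖_{L^1} < ‖φ‖_{L^1} if and only if |φ^o(x)| < |φ^e(x)| on a subset of ]-a,a[ of positive measure. -/
/-!
Pointwise, `|φ^o(x)| ≤ (|φ(x)| + |φ(-x)|) / 2`, and the right-hand side has the same integral
as `|φ|` because the measure is invariant under `x ↦ -x`. Since `|u| + |v| = max |u + v| |u - v|`,
this pointwise inequality is strict exactly where `|φ^o(x)| < |φ^e(x)|`; and an integrable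
function dominated by another has strictly smaller integral iff the inequality is strict on a
set of positive measure.
-/

open MeasureTheory Set
open scoped ENNReal

section

variable {K : Type*} [Field K] [LinearOrder K] [IsStrictOrderedRing K]

theorem abs_add_abs_eq_max_abs_add_abs_sub (u v : K) : |u| + |v| = max |u + v| |u - v| := by
  rcases abs_cases u with ⟨hu, hu'⟩ | ⟨hu, hu'⟩ <;> rcases abs_cases v with ⟨hv, hv'⟩ | ⟨hv, hv'⟩ <;>
  rcases abs_cases (u + v) with ⟨h₁, h₁'⟩ | ⟨h₁, h₁'⟩ <;>
  rcases abs_cases (u - v) with ⟨h₂, h₂'⟩ | ⟨h₂, h₂'⟩ <;>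
  simp only [max_def] <;> split_ifs <;> linarith

theorem abs_half_sub_le_half_abs_add_abs (u v : K) : |(u - v) / 2| ≤ (|u| + |v|) / 2 := by
  rw [abs_div, abs_two, abs_add_abs_eq_max_abs_add_abs_sub]
  gcongr
  exact le_max_right _ _

theorem abs_half_sub_lt_half_abs_add_abs_iff (u v : K) :
    |(u - v) / 2| < (|u| + |v|) / 2 ↔ |(u - v) / 2| < |(u + v) / 2| := by
  simp only [abs_div, abs_two, div_lt_div_iff_of_pos_right (zero_lt_two' K),
    abs_add_abs_eq_max_abs_add_abs_sub, lt_max_iff, lt_irrefl, or_false]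

theorem ENNReal.ofReal_half_abs_add_abs (u v : ℝ) :
    ENNReal.ofReal ((|u| + |v|) / 2) = ‖u‖ₑ / 2 + ‖v‖ₑ / 2 := by
  rw [ENNReal.ofReal_div_of_pos two_pos, ENNReal.ofReal_add (abs_nonneg u) (abs_nonneg v),
    ENNReal.add_div, Real.enorm_eq_ofReal_abs, Real.enorm_eq_ofReal_abs, ENNReal.ofReal_ofNat]

end

namespace MeasureTheory

variable {α : Type*} [MeasurableSpace α] {μ : Measure α}

theorem Measure.IsNegInvariant.restrict [InvolutiveNeg α] [MeasurableNeg α] [μ.IsNegInvariant]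
    {s : Set α} (hs : -s = s) : (μ.restrict s).IsNegInvariant := by
  refine ⟨Measure.ext fun t ht => ?_⟩
  rw [Measure.neg_apply, Measure.restrict_apply ht.neg, Measure.restrict_apply ht,
    ← Measure.measure_neg, Set.inter_neg, neg_neg, hs]

theorem lintegral_lt_lintegral_iff_measure_pos {f g : α → ℝ≥0∞} (hg : AEMeasurable g μ)
    (hfi : ∫⁻ x, f x ∂μ ≠ ∞) (h_le : f ≤ᵐ[μ] g) :
    ∫⁻ x, f x ∂μ < ∫⁻ x, g x ∂μ ↔ 0 < μ {x | f x < g x} := by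
  refine ⟨fun hlt => pos_iff_ne_zero.2 fun hzero => hlt.ne ?_, fun hpos =>
    lintegral_strict_mono_of_ae_le_of_ae_lt_on hg hfi h_le hpos.ne' (ae_of_all _ fun _ h => h)⟩
  refine lintegral_congr_ae ?_
  filter_upwards [h_le, measure_eq_zero_iff_ae_notMem.1 hzero] with x hle hnlt
  exact hle.antisymm (not_lt.1 hnlt)

section NegInvariant

variable [InvolutiveNeg α] [MeasurableNeg α] [μ.IsNegInvariant] {φ : α → ℝ}

theorem lintegral_half_abs_add_abs_neg (hφ : AEMeasurable φ μ) :
    ∫⁻ x, ENNReal.ofReal ((|φ x| + |φ (-x)|) / 2) ∂μ = ∫⁻ x, ‖φ x‖ₑ ∂μ := by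
  simp_rw [ENNReal.ofReal_half_abs_add_abs]
  rw [lintegral_add_left' (hφ.enorm.div_const 2), lintegral_neg_eq_self (fun x => ‖φ x‖ₑ / 2),
    ← lintegral_add_left' (hφ.enorm.div_const 2)]
  simp_rw [ENNReal.add_halves]

theorem eLpNorm_oddPart_lt_iff (hφ : MemLp φ 1 μ) :
    eLpNorm (fun x => (φ x - φ (-x)) / 2) 1 μ < eLpNorm φ 1 μ ↔
      0 < μ {x | |(φ x - φ (-x)) / 2| < |(φ x + φ (-x)) / 2|} := by
  have hφ_meas := hφ.aestronglyMeasurable.aemeasurable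
  have h_le : ∀ x, ENNReal.ofReal |(φ x - φ (-x)) / 2| ≤ ENNReal.ofReal ((|φ x| + |φ (-x)|) / 2) :=
    fun x => ENNReal.ofReal_le_ofReal (abs_half_sub_le_half_abs_add_abs _ _)
  have h_mean_meas : AEMeasurable (fun x => ENNReal.ofReal ((|φ x| + |φ (-x)|) / 2)) μ :=
    ((hφ_meas.abs.add (hφ_meas.comp_quasiMeasurePreserving
      (Measure.measurePreserving_neg μ).quasiMeasurePreserving).abs).div_const 2).ennreal_ofReal
  rw [eLpNorm_one_eq_lintegral_enorm, eLpNorm_one_eq_lintegral_enorm,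
    ← lintegral_half_abs_add_abs_neg hφ_meas]
  simp_rw [Real.enorm_eq_ofReal_abs]
  have h_fin : ∫⁻ x, ENNReal.ofReal |(φ x - φ (-x)) / 2| ∂μ ≠ ∞ := by
    refine ((lintegral_mono h_le).trans_lt ?_).ne
    rw [lintegral_half_abs_add_abs_neg hφ_meas, ← eLpNorm_one_eq_lintegral_enorm]
    exact hφ.eLpNorm_lt_top
  rw [lintegral_lt_lintegral_iff_measure_pos h_mean_meas h_fin (ae_of_all _ h_le)]
  simp_rw [ENNReal.ofReal_lt_ofReal_iff_of_nonneg (abs_nonneg _),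
    abs_half_sub_lt_half_abs_add_abs_iff]

end NegInvariant

end MeasureTheory

theorem oddPart_eLpNorm_lt_iff_general (a : ℝ)
    (φ : ℝ → ℝ) (hφ : MemLp φ 1 (volume.restrict (Ioo (-a) a))) :
    eLpNorm (fun x => (φ x - φ (-x)) / 2) 1 (volume.restrict (Ioo (-a) a)) <
      eLpNorm φ 1 (volume.restrict (Ioo (-a) a)) ↔
    0 < volume {x ∈ Ioo (-a) a |
        |(φ x - φ (-x)) / 2| < |(φ x + φ (-x)) / 2|} := by
  have : (volume.restrict (Ioo (-a) a)).IsNegInvariant :=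
    Measure.IsNegInvariant.restrict (by rw [Set.neg_Ioo, neg_neg])
  rw [eLpNorm_oddPart_lt_iff hφ, Measure.restrict_apply' measurableSet_Ioo, Set.inter_comm,
    Set.inter_ofPred_eq_sep]

/-- For `φ ∈ L¹(]-a,a[)`, the `L¹` norm of the odd part is strictly smaller than that
of `φ` if and only if `|φ^o| < |φ^e|` on a set of positive measure. -/
theorem oddPart_eLpNorm_lt_iff (a : ℝ) (ha : 0 < a)
    (φ : ℝ → ℝ) (hφ : MemLp φ 1 (volume.restrict (Ioo (-a) a))) :
    eLpNorm (fun x => (φ x - φ (-x)) / 2) 1 (volume.restrict (Ioo (-a) a)) <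
      eLpNorm φ 1 (volume.restrict (Ioo (-a) a)) ↔
    0 < volume {x ∈ Ioo (-a) a |
        |(φ x - φ (-x)) / 2| < |(φ x + φ (-x)) / 2|} :=
  oddPart_eLpNorm_lt_iff_general a φ hφ
end

section
/- Let a > 0 and φ ∈ C^0([-a,a]). Then ‖φ^o‖_{L^∞} < ‖φ‖_{L^∞} if and only if φ^e(x̄) ≠ 0 at every point x̄ ∈ [-a,a] where |φ| attains its maximum. -/
/-!
Pointwise `|φᵒ(x)| ≤ (|φ(x)| + |φ(-x)|)/2 ≤ ‖φ‖`, and the upper bound is reached only when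
`φ(-x) = -φ(x)` and `|φ(x)| = ‖φ‖`. Since `|φᵒ|` attains its supremum on a compact set, that supremum
equals `‖φ‖` exactly when `φᵉ` vanishes at some maximum point of `|φ|`.
-/

open Set

theorem add_eq_zero_and_abs_eq_of_le_abs_half_sub {u v M : ℝ} (hu : |u| ≤ M) (hv : |v| ≤ M)
    (h : M ≤ |(u - v) / 2|) : u + v = 0 ∧ |u| = M := by
  obtain ⟨hu₁, hu₂⟩ := abs_le.mp hu
  obtain ⟨hv₁, hv₂⟩ := abs_le.mp hv
  rcases le_abs'.mp h with h | h
  · exact ⟨by linarith, le_antisymm hu (le_abs'.2 (Or.inl (by linarith)))⟩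
  · exact ⟨by linarith, le_antisymm hu (le_abs'.2 (Or.inr (by linarith)))⟩

section

variable {E : Type*} [TopologicalSpace E] [Neg E] [ContinuousNeg E] {s : Set E} {φ : E → ℝ}

theorem sSup_abs_le_sSup_abs_oddPart_iff (hs : IsCompact s) (hne : s.Nonempty)
    (hs_neg : ∀ x ∈ s, -x ∈ s) (hφ : ContinuousOn φ s) :
    sSup ((fun x => |φ x|) '' s) ≤ sSup ((fun x => |(φ x - φ (-x)) / 2|) '' s) ↔
      ∃ x ∈ s, (∀ y ∈ s, |φ y| ≤ |φ x|) ∧ φ x + φ (-x) = 0 := by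
  have hφ_neg : ContinuousOn (fun x => φ (-x)) s := hφ.comp continuous_neg.continuousOn hs_neg
  have hodd : ContinuousOn (fun x => |(φ x - φ (-x)) / 2|) s := ((hφ.sub hφ_neg).div_const 2).abs
  have le_sup : ∀ x ∈ s, |φ x| ≤ sSup ((fun x => |φ x|) '' s) := fun x hx =>
    le_csSup (hs.image_of_continuousOn hφ.abs).bddAbove (mem_image_of_mem _ hx)
  constructor
  · intro hle
    obtain ⟨z, hz, hz_eq⟩ := (hs.image_of_continuousOn hodd).sSup_mem (hne.image _)
    obtain ⟨heven, hmax⟩ := add_eq_zero_and_abs_eq_of_le_abs_half_sub (le_sup z hz)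
      (le_sup (-z) (hs_neg z hz)) (hle.trans hz_eq.ge)
    exact ⟨z, hz, fun y hy => hmax ▸ le_sup y hy, heven⟩
  · rintro ⟨x, hx, hmax, heven⟩
    have hodd_x : (φ x - φ (-x)) / 2 = φ x := by linear_combination -heven / 2
    calc sSup ((fun x => |φ x|) '' s) ≤ |φ x| := csSup_le (hne.image _) (forall_mem_image.2 hmax)
      _ = |(φ x - φ (-x)) / 2| := by rw [hodd_x]
      _ ≤ _ := le_csSup (hs.image_of_continuousOn hodd).bddAbove (mem_image_of_mem _ hx)

end

/-- For continuous `φ` on `[-a,a]`, the sup norm of the odd part is strictly smaller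
than the sup norm of `φ` if and only if the even part is nonzero at every point where
`|φ|` attains its maximum. -/
theorem oddPart_supNorm_lt_iff (a : ℝ) (ha : 0 < a)
    (φ : ℝ → ℝ) (hφ : ContinuousOn φ (Icc (-a) a)) :
    sSup ((fun x => |(φ x - φ (-x)) / 2|) '' Icc (-a) a) <
      sSup ((fun x => |φ x|) '' Icc (-a) a) ↔
    ∀ x ∈ Icc (-a) a, (∀ y ∈ Icc (-a) a, |φ y| ≤ |φ x|) →
      (φ x + φ (-x)) / 2 ≠ 0 := by
  have hne : (Icc (-a) a).Nonempty := nonempty_Icc.2 (by linarith)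
  have hs_neg : ∀ x ∈ Icc (-a) a, -x ∈ Icc (-a) a := fun x ⟨h₁, h₂⟩ => ⟨neg_le_neg h₂, by linarith⟩
  rw [← not_iff_not, not_lt, sSup_abs_le_sSup_abs_oddPart_iff isCompact_Icc hne hs_neg hφ]
  simp [div_eq_zero_iff, and_assoc]
end

section
/- Let m be a positive integer and g(x) = sin(mx) + sin(3mx) on ]0,π[. Then ∫₀^π |g(x)| dx = 8/3. -/
/-!
Since `sin x + sin 3x = 4 sin x cos² x`, the function `g x = sin x + sin 3x` is `π`-antiperiodic and
nonnegative on `[0, π]`. Hence `|g|` is `π`-periodic, so `∫₀^π |g (m x)| dx = ∫₀^π |g x| dx`, and the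
latter equals `∫₀^π (sin x + sin 3x) dx = 2 + 2/3`.
-/

open intervalIntegral Real

theorem Function.Periodic.intervalIntegral_comp_nat_mul {E : Type*} [NormedAddCommGroup E]
    [NormedSpace ℝ E] {f : ℝ → E} {T : ℝ} (hf : Function.Periodic f T)
    (h_int : ∀ a b, IntervalIntegrable f MeasureTheory.volume a b) {m : ℕ} (hm : m ≠ 0) :
    ∫ x in 0..T, f (m * x) = ∫ x in 0..T, f x := by
  have hm' : (m : ℝ) ≠ 0 := Nat.cast_ne_zero.mpr hm
  have h := hf.intervalIntegral_add_zsmul_eq m 0 h_int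
  simp only [zero_add, natCast_zsmul] at h
  rw [integral_comp_mul_left f hm', mul_zero, ← nsmul_eq_mul, h, ← Nat.cast_smul_eq_nsmul ℝ,
    inv_smul_smul₀ hm']

theorem sin_add_sin_three_mul (x : ℝ) : sin x + sin (3 * x) = 4 * sin x * cos x ^ 2 := by
  rw [sin_three_mul]
  linear_combination (-4 * sin x) * sin_sq_add_cos_sq x

theorem sin_add_sin_three_mul_antiperiodic :
    Function.Antiperiodic (fun x => sin x + sin (3 * x)) π := by
  intro x
  simp only [sin_add_sin_three_mul]
  rw [sin_add_pi, cos_add_pi]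
  ring

theorem abs_sin_add_sin_three_mul_periodic :
    Function.Periodic (fun x => |sin x + sin (3 * x)|) π := fun x => by
  simp only [sin_add_sin_three_mul_antiperiodic x, abs_neg]

theorem sin_add_sin_three_mul_nonneg {x : ℝ} (hx₀ : 0 ≤ x) (hxπ : x ≤ π) :
    0 ≤ sin x + sin (3 * x) := by
  rw [sin_add_sin_three_mul]
  have := sin_nonneg_of_nonneg_of_le_pi hx₀ hxπ
  positivity

theorem integral_sin_add_sin_three_mul : ∫ x in 0..π, sin x + sin (3 * x) = 8 / 3 := by
  have hcos : cos (3 * π) = -1 := by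
    rw [show 3 * π = π + 2 * π by ring, cos_add_two_pi, cos_pi]
  rw [integral_add intervalIntegrable_sin
    ((by fun_prop : Continuous fun x => sin (3 * x)).intervalIntegrable _ _),
    integral_comp_mul_left sin (by norm_num : (3 : ℝ) ≠ 0), integral_sin, integral_sin]
  norm_num [hcos]

theorem integral_abs_sin_add_sin_three_mul :
    ∫ x in 0..π, |sin x + sin (3 * x)| = 8 / 3 := by
  rw [← integral_sin_add_sin_three_mul]
  refine integral_congr fun x hx => abs_of_nonneg ?_
  rw [Set.uIcc_of_le pi_pos.le] at hx
  exact sin_add_sin_three_mul_nonneg hx.1 hx.2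

/-- For any positive integer `m`, `∫₀^π |sin(mx) + sin(3mx)| dx = 8/3`. -/
theorem integral_abs_sin_add_sin_three (m : ℕ) (hm : 0 < m) :
    ∫ x in (0:ℝ)..Real.pi, |Real.sin (m * x) + Real.sin (3 * m * x)| = 8 / 3 := by
  have h := abs_sin_add_sin_three_mul_periodic.intervalIntegral_comp_nat_mul
    (fun a b => (by fun_prop : Continuous _).intervalIntegrable a b) hm.ne'
  simp only [mul_assoc] at h ⊢
  rw [h, integral_abs_sin_add_sin_three_mul]
end

section
/- Let ℓ > 0, α > 0 and set K_α := α/(2 C sinh(αℓ)) for a constant C > 0, and let v ∈ C¹([-ℓ,ℓ]). Then ∫_{-ℓ}^{ℓ} K_α e^{αy} v(y) dy → v(ℓ)/C as α → +∞. -/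
/-!
Being `C¹` on `[-ℓ, ℓ]`, `v` is Lipschitz there, so `|v y - v ℓ| ≤ L (ℓ - y)`. The kernel
`K_α e^{αy}` has mass exactly `1 / C`, and an integration by parts bounds its first moment
`∫ K_α e^{αy} (ℓ - y) dy` about `ℓ` by `1 / (C α)`. Hence the integral differs from `v ℓ / C`
by at most `L / (C α)`.
-/

open Filter Set Real intervalIntegral

theorem integral_exp_mul (α a b : ℝ) (hα : α ≠ 0) :
    ∫ y in a..b, exp (α * y) = (exp (α * b) - exp (α * a)) / α := by
  rw [integral_comp_mul_left (fun y => exp y) hα, integral_exp, smul_eq_mul, inv_mul_eq_div]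

theorem integral_exp_mul_neg_self (α ℓ : ℝ) (hα : α ≠ 0) :
    ∫ y in (-ℓ)..ℓ, exp (α * y) = 2 * sinh (α * ℓ) / α := by
  rw [integral_exp_mul α _ _ hα, sinh_eq, mul_neg]
  ring

theorem mul_integral_exp_mul_mul_sub (α a b : ℝ) :
    α * ∫ y in a..b, exp (α * y) * (b - y) =
      (∫ y in a..b, exp (α * y)) - (b - a) * exp (α * a) := by
  have hparts := integral_mul_deriv_eq_deriv_mul (a := a) (b := b) (u := fun y => b - y)
    (v := fun y => exp (α * y)) (u' := fun _ => -1) (v' := fun y => exp (α * y) * α)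
    (fun y _ => by simpa using (hasDerivAt_id y).const_sub b)
    (fun y _ => by simpa using ((hasDerivAt_id y).const_mul α).exp)
    intervalIntegrable_const
    ((by fun_prop : Continuous fun y => exp (α * y) * α).intervalIntegrable a b)
  simp only [neg_one_mul, integral_neg, sub_self, zero_mul, zero_sub, sub_neg_eq_add] at hparts
  rw [← integral_const_mul]
  convert hparts using 1
  · congr 1 with y
    ring
  · ring

theorem integral_exp_mul_mul_sub_le {α a b : ℝ} (hα : 0 < α) (hab : a ≤ b) :
    ∫ y in a..b, exp (α * y) * (b - y) ≤ (∫ y in a..b, exp (α * y)) / α := by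
  rw [le_div_iff₀ hα, mul_comm, mul_integral_exp_mul_mul_sub]
  have hboundary : 0 ≤ (b - a) * exp (α * a) := mul_nonneg (sub_nonneg.2 hab) (exp_pos _).le
  linarith

theorem abs_integral_mul_sub_integral_mul_le {a b : ℝ} (hab : a ≤ b) {k v : ℝ → ℝ} {L : NNReal}
    (hk : ContinuousOn k (Icc a b)) (hk0 : ∀ y ∈ Icc a b, 0 ≤ k y)
    (hv : LipschitzOnWith L v (Icc a b)) :
    |(∫ y in a..b, k y * v y) - (∫ y in a..b, k y) * v b| ≤ L * ∫ y in a..b, k y * (b - y) := by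
  have hkv : IntervalIntegrable (fun y => k y * v y) MeasureTheory.volume a b :=
    (hk.mul hv.continuousOn).intervalIntegrable_of_Icc hab
  have hk' : IntervalIntegrable k MeasureTheory.volume a b := hk.intervalIntegrable_of_Icc hab
  rw [← integral_mul_const, ← integral_sub hkv (hk'.mul_const _), ← integral_const_mul]
  calc |∫ y in a..b, k y * v y - k y * v b|
      ≤ ∫ y in a..b, |k y * v y - k y * v b| := abs_integral_le_integral_abs hab
    _ ≤ ∫ y in a..b, L * (k y * (b - y)) := by
      refine integral_mono_on hab (hkv.sub (hk'.mul_const _)).abs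
        ((hk.mul (continuousOn_const.sub continuousOn_id)).intervalIntegrable_of_Icc hab
          |>.const_mul _) fun y hy => ?_
      have hlip := hv.dist_le_mul y hy b (right_mem_Icc.2 hab)
      rw [Real.dist_eq, Real.dist_eq, abs_sub_comm y, abs_of_nonneg (sub_nonneg.2 hy.2)] at hlip
      rw [← mul_sub, abs_mul, abs_of_nonneg (hk0 y hy)]
      calc k y * |v y - v b| ≤ k y * (L * (b - y)) := mul_le_mul_of_nonneg_left hlip (hk0 y hy)
        _ = L * (k y * (b - y)) := by ring

theorem integral_exp_profile {α ℓ C : ℝ} (hα : α ≠ 0) (hℓ : ℓ ≠ 0) (hC : C ≠ 0) :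
    ∫ y in (-ℓ)..ℓ, α / (2 * C * sinh (α * ℓ)) * exp (α * y) = 1 / C := by
  have hsinh : sinh (α * ℓ) ≠ 0 := sinh_ne_zero.2 (mul_ne_zero hα hℓ)
  rw [integral_const_mul, integral_exp_mul_neg_self α ℓ hα]
  field_simp

theorem integral_exp_profile_mul_sub_le {α ℓ C : ℝ} (hα : 0 < α) (hℓ : 0 < ℓ) (hC : 0 < C) :
    ∫ y in (-ℓ)..ℓ, α / (2 * C * sinh (α * ℓ)) * exp (α * y) * (ℓ - y) ≤ 1 / C * α⁻¹ := by
  have hK : 0 ≤ α / (2 * C * sinh (α * ℓ)) := by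
    have := sinh_pos_iff.2 (mul_pos hα hℓ)
    positivity
  simp_rw [mul_assoc (α / (2 * C * sinh (α * ℓ))), integral_const_mul]
  calc α / (2 * C * sinh (α * ℓ)) * ∫ y in (-ℓ)..ℓ, exp (α * y) * (ℓ - y)
      ≤ α / (2 * C * sinh (α * ℓ)) * ((∫ y in (-ℓ)..ℓ, exp (α * y)) / α) :=
        mul_le_mul_of_nonneg_left (integral_exp_mul_mul_sub_le hα (by linarith)) hK
    _ = 1 / C * α⁻¹ := by
        rw [← mul_div_assoc, ← integral_const_mul, integral_exp_profile hα.ne' hℓ.ne' hC.ne',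
          div_eq_mul_inv]

/-- Concentration of the normalized exponential profile at the upper endpoint:
for `v ∈ C¹([-ℓ,ℓ])`, `∫_{-ℓ}^{ℓ} K_α e^{αy} v(y) dy → v(ℓ)/C` as `α → ∞`, where
`K_α = α/(2C sinh(αℓ))`. -/
theorem exp_profile_concentrates (ℓ C : ℝ) (hℓ : 0 < ℓ) (hC : 0 < C)
    (v : ℝ → ℝ) (hv : ContDiffOn ℝ 1 v (Set.Icc (-ℓ) ℓ)) :
    Tendsto (fun α : ℝ =>
        ∫ y in (-ℓ)..ℓ, (α / (2 * C * Real.sinh (α * ℓ))) * Real.exp (α * y) * v y)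
      atTop (nhds (v ℓ / C)) := by
  obtain ⟨L, hL⟩ := hv.exists_lipschitzOnWith one_ne_zero (convex_Icc _ _) isCompact_Icc
  rw [tendsto_iff_norm_sub_tendsto_zero]
  refine squeeze_zero' (Eventually.of_forall fun _ => norm_nonneg _) ?_
    (by simpa using tendsto_inv_atTop_zero.const_mul (L / C))
  filter_upwards [eventually_gt_atTop 0] with α hα
  have hK : 0 ≤ α / (2 * C * sinh (α * ℓ)) := by
    have := sinh_pos_iff.2 (mul_pos hα hℓ)
    positivity
  set k := fun y => α / (2 * C * sinh (α * ℓ)) * exp (α * y)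
  calc ‖(∫ y in (-ℓ)..ℓ, k y * v y) - v ℓ / C‖
      = |(∫ y in (-ℓ)..ℓ, k y * v y) - (∫ y in (-ℓ)..ℓ, k y) * v ℓ| := by
        rw [integral_exp_profile hα.ne' hℓ.ne' hC.ne', Real.norm_eq_abs, one_div_mul_eq_div]
    _ ≤ L * ∫ y in (-ℓ)..ℓ, k y * (ℓ - y) :=
        abs_integral_mul_sub_integral_mul_le (by linarith) (by fun_prop)
          (fun y _ => by positivity) hL
    _ ≤ L * (1 / C * α⁻¹) :=
        mul_le_mul_of_nonneg_left (integral_exp_profile_mul_sub_le hα hℓ hC) L.2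
    _ = L / C * α⁻¹ := by ring
end

section
/- Let ℓ > 0, α > 0 with cosh(αℓ) > 1, set R_α := α/(2C(cosh(αℓ)-1)) for a constant C > 0, and let v ∈ C¹([-ℓ,ℓ]). Then ∫_{-ℓ}^{ℓ} R_α sinh(αy) v(y) dy → (v(ℓ) - v(-ℓ))/(2C) as α → +∞. -/
/-!
Integrating by parts against `cosh (α y) / α`,
`α ∫ sinh (α y) v y dy = cosh (α ℓ) (v ℓ - v (-ℓ)) - ∫ cosh (α y) v' y dy`.
Since `∫_{-ℓ}^{ℓ} cosh (α y) dy = 2 sinh (α ℓ) / α ≤ 2 cosh (α ℓ) / α`, the remainder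
is `O(cosh (α ℓ) / α)`, negligible against `cosh (α ℓ) - 1`, while
`cosh (α ℓ) / (cosh (α ℓ) - 1) → 1`.
-/

open Filter Set Real Topology intervalIntegral

theorem Real.abs_sinh_le_cosh (x : ℝ) : |sinh x| ≤ cosh x := by
  rw [abs_sinh, ← cosh_abs x]
  exact (sinh_lt_cosh _).le

theorem Real.tendsto_cosh_atTop : Tendsto cosh atTop atTop :=
  tendsto_atTop_mono (fun x => by rw [cosh_eq]; linarith [exp_pos (-x)])
    (tendsto_exp_atTop.atTop_div_const two_pos)

theorem tendsto_div_sub_one_atTop : Tendsto (fun x : ℝ => x / (x - 1)) atTop (𝓝 1) := by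
  have h := (tendsto_inv_atTop_zero.comp
    (tendsto_atTop_add_const_right atTop (-1) tendsto_id)).const_add (1 : ℝ)
  rw [add_zero] at h
  refine h.congr' ?_
  filter_upwards [eventually_gt_atTop 1] with x hx
  have : x - 1 ≠ 0 := by linarith
  simp only [Function.comp, id, ← sub_eq_add_neg]
  field_simp
  ring

theorem integral_cosh_mul_symm_interval (ℓ : ℝ) {α : ℝ} (hα : α ≠ 0) :
    ∫ y in -ℓ..ℓ, cosh (α * y) = 2 * sinh (α * ℓ) / α := by
  have hderiv (y : ℝ) : HasDerivAt (fun y => sinh (α * y) / α) (cosh (α * y)) y := by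
    refine ((((hasDerivAt_id' y).const_mul α).sinh).div_const α).congr_deriv ?_
    rw [mul_one, mul_div_cancel_right₀ _ hα]
  rw [integral_eq_sub_of_hasDerivAt (fun y _ => hderiv y)
    ((by fun_prop : Continuous fun y => cosh (α * y)).intervalIntegrable _ _), mul_neg, sinh_neg]
  ring

theorem abs_integral_cosh_mul_mul_le {ℓ α M : ℝ} {g : ℝ → ℝ} (hα : 0 < α)
    (hg : ∀ y ∈ uIcc (-ℓ) ℓ, |g y| ≤ M) :
    |∫ y in -ℓ..ℓ, cosh (α * y) * g y| ≤ 2 * M * cosh (α * ℓ) / α := by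
  have hM : 0 ≤ M := (abs_nonneg _).trans (hg ℓ right_mem_uIcc)
  have hpoint : ∀ᵐ y ∂MeasureTheory.volume.restrict (uIoc (-ℓ) ℓ),
      ‖cosh (α * y) * g y‖ ≤ cosh (α * y) * M := by
    filter_upwards [MeasureTheory.ae_restrict_mem measurableSet_uIoc] with y hy
    rw [norm_mul, norm_of_nonneg (cosh_pos _).le]
    exact mul_le_mul_of_nonneg_left (hg y (uIoc_subset_uIcc hy)) (cosh_pos _).le
  calc |∫ y in -ℓ..ℓ, cosh (α * y) * g y|
      ≤ |∫ y in -ℓ..ℓ, cosh (α * y) * M| :=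
        norm_integral_le_abs_of_norm_le hpoint
          ((by fun_prop : Continuous fun y => cosh (α * y) * M).intervalIntegrable _ _)
    _ = 2 * M * |sinh (α * ℓ)| / α := by
        rw [integral_mul_const, integral_cosh_mul_symm_interval ℓ hα.ne', abs_mul, abs_div,
          abs_mul, abs_of_pos hα, abs_two, abs_of_nonneg hM]
        ring
    _ ≤ 2 * M * cosh (α * ℓ) / α := by
        gcongr
        exact abs_sinh_le_cosh _

theorem tendsto_integral_cosh_mul_mul_div_cosh {ℓ : ℝ} {g : ℝ → ℝ}
    (hg : ContinuousOn g (uIcc (-ℓ) ℓ)) :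
    Tendsto (fun α => (∫ y in -ℓ..ℓ, cosh (α * y) * g y) / cosh (α * ℓ)) atTop (𝓝 0) := by
  obtain ⟨M, hM⟩ := isCompact_uIcc.exists_bound_of_continuousOn hg
  refine squeeze_zero_norm' ?_
    ((tendsto_inv_atTop_zero.const_mul (2 * M)).trans (by rw [mul_zero]))
  filter_upwards [eventually_gt_atTop 0] with α hα
  rw [norm_div, norm_of_nonneg (cosh_pos _).le, div_le_iff₀ (cosh_pos _)]
  calc _ ≤ 2 * M * cosh (α * ℓ) / α := abs_integral_cosh_mul_mul_le hα hM
    _ = _ := by ring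

theorem mul_integral_sinh_mul_mul_eq {a b α : ℝ} {v v' : ℝ → ℝ}
    (hv : ∀ x ∈ uIcc a b, HasDerivWithinAt v (v' x) (uIcc a b) x)
    (hv' : IntervalIntegrable v' MeasureTheory.volume a b) :
    α * ∫ y in a..b, sinh (α * y) * v y
      = cosh (α * b) * v b - cosh (α * a) * v a - ∫ y in a..b, cosh (α * y) * v' y := by
  have hcosh (y : ℝ) : HasDerivAt (fun y => cosh (α * y)) (α * sinh (α * y)) y :=
    (((hasDerivAt_id' y).const_mul α).cosh).congr_deriv (by ring)
  rw [integral_mul_deriv_eq_deriv_mul_of_hasDerivWithinAt (fun y _ => (hcosh y).hasDerivWithinAt) hv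
    ((by fun_prop : Continuous fun y => α * sinh (α * y)).intervalIntegrable _ _) hv',
    ← integral_const_mul]
  simp only [mul_assoc]
  ring

theorem sinh_profile_concentrates_general (ℓ C : ℝ) (hℓ : 0 < ℓ)
    (v : ℝ → ℝ) (hv : ContDiffOn ℝ 1 v (Set.Icc (-ℓ) ℓ)) :
    Tendsto (fun α : ℝ =>
        ∫ y in (-ℓ)..ℓ,
          (α / (2 * C * (Real.cosh (α * ℓ) - 1))) * Real.sinh (α * y) * v y)
      atTop (nhds ((v ℓ - v (-ℓ)) / (2 * C))) := by
  have hI : uIcc (-ℓ) ℓ = Icc (-ℓ) ℓ := uIcc_of_le (by linarith)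
  set v' := derivWithin v (Icc (-ℓ) ℓ)
  have hv'c : ContinuousOn v' (uIcc (-ℓ) ℓ) :=
    hI ▸ hv.continuousOn_derivWithin (uniqueDiffOn_Icc (by linarith)) le_rfl
  have hderiv : ∀ x ∈ uIcc (-ℓ) ℓ, HasDerivWithinAt v (v' x) (uIcc (-ℓ) ℓ) x := by
    rw [hI]
    exact fun x hx => (hv.differentiableOn one_ne_zero x hx).hasDerivWithinAt
  have hratio : Tendsto (fun α => cosh (α * ℓ) / (cosh (α * ℓ) - 1)) atTop (𝓝 1) :=
    tendsto_div_sub_one_atTop.comp (tendsto_cosh_atTop.comp (tendsto_id.atTop_mul_const hℓ))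
  have hlim := (hratio.mul
    ((tendsto_integral_cosh_mul_mul_div_cosh hv'c).const_sub (v ℓ - v (-ℓ)))).div_const (2 * C)
  rw [one_mul, sub_zero] at hlim
  refine hlim.congr' ?_
  filter_upwards [eventually_gt_atTop 0] with α hα
  have hcosh : cosh (α * ℓ) - 1 ≠ 0 := (sub_pos.2 (one_lt_cosh.2 (by positivity))).ne'
  have hparts := mul_integral_sinh_mul_mul_eq (α := α) hderiv hv'c.intervalIntegrable
  rw [mul_neg, cosh_neg] at hparts
  simp only [mul_assoc, integral_const_mul]
  rw [div_mul_eq_mul_div α, hparts]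
  field_simp

/-- Concentration of the odd exponential profile at the two endpoints: for
`v ∈ C¹([-ℓ,ℓ])`, `∫_{-ℓ}^{ℓ} R_α sinh(αy) v(y) dy → (v(ℓ) - v(-ℓ))/(2C)` as
`α → ∞`, where `R_α = α/(2C(cosh(αℓ)-1))`. -/
theorem sinh_profile_concentrates (ℓ C : ℝ) (hℓ : 0 < ℓ) (hC : 0 < C)
    (v : ℝ → ℝ) (hv : ContDiffOn ℝ 1 v (Set.Icc (-ℓ) ℓ)) :
    Tendsto (fun α : ℝ =>
        ∫ y in (-ℓ)..ℓ,
          (α / (2 * C * (Real.cosh (α * ℓ) - 1))) * Real.sinh (α * y) * v y)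
      atTop (nhds ((v ℓ - v (-ℓ)) / (2 * C))) :=
  sinh_profile_concentrates_general ℓ C hℓ v hv
end
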